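/- arXiv:2103.09902 — 3 statements merged into one kernel-verified Lean document; each statement's English description precedes it below -/
import Mathlib

section
/- Define f(x₁,…,x₄,y₁,…,y₅) = 3x₄ + x₃ − x₂ − 3x₁ + 4y₅ + 2y₄ − 2y₂ − 4y₁ on the compact region given by 0 ≤ x₁ ≤ x₂ ≤ x₃ ≤ x₄ with Σx_i = 1, 0 ≤ y₁ ≤ ⋯ ≤ y₅ with Σy_j = 2, and x₁ + y₁ + y₂ ≤ 1. Then the minimum of f over this region is 1/5, attained at (1/5, 4/15, 4/15, 4/15, 2/5, 2/5, 2/5, 2/5, 2/5). -/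
/-- Define `f(x₁,…,x₄,y₁,…,y₅) = 3x₄ + x₃ - x₂ - 3x₁ + 4y₅ + 2y₄ - 2y₂ - 4y₁` on
the compact region given by `0 ≤ x₁ ≤ x₂ ≤ x₃ ≤ x₄` with `Σxᵢ = 1`,
`0 ≤ y₁ ≤ ⋯ ≤ y₅` with `Σyⱼ = 2`, and `x₁ + y₁ + y₂ ≤ 1`.  Then the minimum of
`f` over this region is `1/5`, attained at
`(1/5, 4/15, 4/15, 4/15, 2/5, 2/5, 2/5, 2/5, 2/5)`. -/
theorem degree5_LP_minimum :
    IsLeast { v : ℝ | ∃ x₁ x₂ x₃ x₄ y₁ y₂ y₃ y₄ y₅ : ℝ,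
        0 ≤ x₁ ∧ x₁ ≤ x₂ ∧ x₂ ≤ x₃ ∧ x₃ ≤ x₄ ∧ x₁ + x₂ + x₃ + x₄ = 1 ∧
        0 ≤ y₁ ∧ y₁ ≤ y₂ ∧ y₂ ≤ y₃ ∧ y₃ ≤ y₄ ∧ y₄ ≤ y₅ ∧
        y₁ + y₂ + y₃ + y₄ + y₅ = 2 ∧
        x₁ + y₁ + y₂ ≤ 1 ∧
        v = 3 * x₄ + x₃ - x₂ - 3 * x₁ + 4 * y₅ + 2 * y₄ - 2 * y₂ - 4 * y₁ } (1 / 5) ∧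
    3 * (4 / 15 : ℝ) + 4 / 15 - 4 / 15 - 3 * (1 / 5) +
      4 * (2 / 5) + 2 * (2 / 5) - 2 * (2 / 5) - 4 * (2 / 5) = 1 / 5 := by
  refine ⟨⟨⟨1/5, 4/15, 4/15, 4/15, 2/5, 2/5, 2/5, 2/5, 2/5, by norm_num⟩, ?_⟩, by norm_num⟩
  rintro v ⟨x₁, x₂, x₃, x₄, y₁, y₂, y₃, y₄, y₅, h1, h2, h3, h4, h5, h6, h7, h8, h9, h10, h11, h12, rfl⟩
  linarith
end

section
/- Let e₁ ≤ e₂ ≤ e₃ and f₁ ≤ f₂ be splitting types with e₁+e₂+e₃ = f₁+f₂ = g+3, satisfying 2e₁ ≥ f₁, 2e₂ ≥ f₂, e₁+e₃ ≥ f₂, and 2e₁ ≤ f₂. Then 2e₃ − 2e₁ + f₂ − f₁ − max(0, f₂ − 2e₁ − 1) − max(0, f₂ − e₁ − e₂ − 1) ≥ (g+3)/4. -/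
/-- Let `e₁ ≤ e₂ ≤ e₃` and `f₁ ≤ f₂` be splitting types (so `0 ≤ e₁`, `0 ≤ f₁`)
with `e₁+e₂+e₃ = f₁+f₂ = g+3`, satisfying `2e₁ ≥ f₁`, `2e₂ ≥ f₂`, `e₁+e₃ ≥ f₂`,
and `2e₁ ≤ f₂`.  Then
`2e₃ - 2e₁ + f₂ - f₁ - max(0, f₂-2e₁-1) - max(0, f₂-e₁-e₂-1) ≥ (g+3)/4`. -/
theorem deg4_key_inequality (g e₁ e₂ e₃ f₁ f₂ : ℤ)
    (he₁₂ : e₁ ≤ e₂) (he₂₃ : e₂ ≤ e₃) (hf : f₁ ≤ f₂)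
    (he₁ : 0 ≤ e₁) (hf₁ : 0 ≤ f₁)
    (hesum : e₁ + e₂ + e₃ = g + 3) (hfsum : f₁ + f₂ = g + 3)
    (h1 : f₁ ≤ 2 * e₁) (h2 : f₂ ≤ 2 * e₂) (h3 : f₂ ≤ e₁ + e₃) (h4 : 2 * e₁ ≤ f₂) :
    ((g : ℚ) + 3) / 4 ≤
      ((2 * e₃ - 2 * e₁ + f₂ - f₁ - max 0 (f₂ - 2 * e₁ - 1)
        - max 0 (f₂ - e₁ - e₂ - 1) : ℤ) : ℚ) := by
  have key : g + 3 ≤ 4 * (2 * e₃ - 2 * e₁ + f₂ - f₁ - max 0 (f₂ - 2 * e₁ - 1)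
      - max 0 (f₂ - e₁ - e₂ - 1)) := by omega
  rw [div_le_iff₀ (by norm_num : (0:ℚ) < 4)]
  have : ((g + 3 : ℤ) : ℚ) ≤ ((4 * (2 * e₃ - 2 * e₁ + f₂ - f₁ - max 0 (f₂ - 2 * e₁ - 1)
      - max 0 (f₂ - e₁ - e₂ - 1)) : ℤ) : ℚ) := by exact_mod_cast key
  push_cast at this ⊢
  linarith
end

section
/- For splitting types e₁ ≤ ⋯ ≤ e₄ summing to g+4 and f₁ ≤ ⋯ ≤ f₅ summing to 2g+8 satisfying f₁+f₃+e₄ ≥ g+4, f₁+f₄+e₃ ≥ g+4, f₂+f₃+e₃ ≥ g+4, and e₁+f₁+f₂ ≤ g+4, the quantity 3e₄+e₃−e₂−3e₁ + 4f₅+2f₄−2f₂−4f₁ − Σ_{i=1}^{4}max(0, g+3−f₁−f₂−e_i) − Σ_{i=1}^{3}max(0, g+3−f₁−f₃−e_i) − Σ_{i=1}^{2}max(0, g+3−f₁−f₄−e_i) − Σ_{i=1}^{2}max(0, g+3−f₂−f₃−e_i) is at least (g+4)/5 − 16. -/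
set_option maxHeartbeats 4000000



private lemma deg5_key_aux (g e₁ e₂ e₃ e₄ f₁ f₂ f₃ f₄ f₅ S1 S2 S3 S4 : ℤ)
    (he₁₂ : e₁ ≤ e₂) (he₂₃ : e₂ ≤ e₃) (he₃₄ : e₃ ≤ e₄) (he₁ : 0 ≤ e₁)
    (hf₁₂ : f₁ ≤ f₂) (hf₂₃ : f₂ ≤ f₃) (hf₃₄ : f₃ ≤ f₄) (hf₄₅ : f₄ ≤ f₅) (hf₁ : 0 ≤ f₁)
    (hesum : e₁ + e₂ + e₃ + e₄ = g + 4)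
    (hfsum : f₁ + f₂ + f₃ + f₄ + f₅ = 2 * g + 8)
    (c1 : g + 4 ≤ f₁ + f₃ + e₄)
    (c2 : g + 4 ≤ f₁ + f₄ + e₃)
    (c3 : g + 4 ≤ f₂ + f₃ + e₃)
    (c4 : e₁ + f₁ + f₂ ≤ g + 4)
    (hS1 : S1 ≤ 0 ∨ S1 ≤ g + 3 - f₁ - f₂ - e₁
        ∨ S1 ≤ 2*(g+3) - 2*f₁ - 2*f₂ - e₁ - e₂
        ∨ S1 ≤ 3*(g+3) - 3*f₁ - 3*f₂ - e₁ - e₂ - e₃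
        ∨ S1 ≤ 4*(g+3) - 4*f₁ - 4*f₂ - e₁ - e₂ - e₃ - e₄)
    (hS2 : S2 ≤ 0 ∨ S2 ≤ g + 3 - f₁ - f₃ - e₁
        ∨ S2 ≤ 2*(g+3) - 2*f₁ - 2*f₃ - e₁ - e₂
        ∨ S2 ≤ 3*(g+3) - 3*f₁ - 3*f₃ - e₁ - e₂ - e₃)
    (hS3 : S3 ≤ 0 ∨ S3 ≤ g + 3 - f₁ - f₄ - e₁
        ∨ S3 ≤ 2*(g+3) - 2*f₁ - 2*f₄ - e₁ - e₂)
    (hS4 : S4 ≤ 0 ∨ S4 ≤ g + 3 - f₂ - f₃ - e₁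
        ∨ S4 ≤ 2*(g+3) - 2*f₂ - 2*f₃ - e₁ - e₂) :
    g + 4 - 16 * 5 ≤ 5 * (3 * e₄ + e₃ - e₂ - 3 * e₁ + 4 * f₅ + 2 * f₄ - 2 * f₂ - 4 * f₁
      - S1 - S2 - S3 - S4) := by
  rcases hS1 with h1|h1|h1|h1|h1 <;> rcases hS2 with h2|h2|h2|h2 <;>
    rcases hS3 with h3|h3|h3 <;> rcases hS4 with h4|h4|h4 <;> linarith

/-- For splitting types `e₁ ≤ ⋯ ≤ e₄` (with `e₁ ≥ 0`) summing to `g+4` and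
`f₁ ≤ ⋯ ≤ f₅` (with `f₁ ≥ 0`) summing to `2g+8`, satisfying
`f₁+f₃+e₄ ≥ g+4`, `f₁+f₄+e₃ ≥ g+4`, `f₂+f₃+e₃ ≥ g+4`, and `e₁+f₁+f₂ ≤ g+4`,
the quantity
`3e₄+e₃-e₂-3e₁ + 4f₅+2f₄-2f₂-4f₁ - Σᵢ₌₁⁴ max(0, g+3-f₁-f₂-eᵢ)
 - Σᵢ₌₁³ max(0, g+3-f₁-f₃-eᵢ) - Σᵢ₌₁² max(0, g+3-f₁-f₄-eᵢ)
 - Σᵢ₌₁² max(0, g+3-f₂-f₃-eᵢ)` is at least `(g+4)/5 - 16`. -/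
theorem deg5_key_inequality (g e₁ e₂ e₃ e₄ f₁ f₂ f₃ f₄ f₅ : ℤ)
    (he₁₂ : e₁ ≤ e₂) (he₂₃ : e₂ ≤ e₃) (he₃₄ : e₃ ≤ e₄) (he₁ : 0 ≤ e₁)
    (hf₁₂ : f₁ ≤ f₂) (hf₂₃ : f₂ ≤ f₃) (hf₃₄ : f₃ ≤ f₄) (hf₄₅ : f₄ ≤ f₅) (hf₁ : 0 ≤ f₁)
    (hesum : e₁ + e₂ + e₃ + e₄ = g + 4)
    (hfsum : f₁ + f₂ + f₃ + f₄ + f₅ = 2 * g + 8)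
    (c1 : g + 4 ≤ f₁ + f₃ + e₄)
    (c2 : g + 4 ≤ f₁ + f₄ + e₃)
    (c3 : g + 4 ≤ f₂ + f₃ + e₃)
    (c4 : e₁ + f₁ + f₂ ≤ g + 4) :
    ((g : ℚ) + 4) / 5 - 16 ≤
      ((3 * e₄ + e₃ - e₂ - 3 * e₁ + 4 * f₅ + 2 * f₄ - 2 * f₂ - 4 * f₁
        - (max 0 (g + 3 - f₁ - f₂ - e₁) + max 0 (g + 3 - f₁ - f₂ - e₂)
          + max 0 (g + 3 - f₁ - f₂ - e₃) + max 0 (g + 3 - f₁ - f₂ - e₄))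
        - (max 0 (g + 3 - f₁ - f₃ - e₁) + max 0 (g + 3 - f₁ - f₃ - e₂)
          + max 0 (g + 3 - f₁ - f₃ - e₃))
        - (max 0 (g + 3 - f₁ - f₄ - e₁) + max 0 (g + 3 - f₁ - f₄ - e₂))
        - (max 0 (g + 3 - f₂ - f₃ - e₁) + max 0 (g + 3 - f₂ - f₃ - e₂)) : ℤ) : ℚ) := by
  have h : g + 4 - 16 * 5 ≤ 5 * (3 * e₄ + e₃ - e₂ - 3 * e₁ + 4 * f₅ + 2 * f₄ - 2 * f₂ - 4 * f₁
        - (max 0 (g + 3 - f₁ - f₂ - e₁) + max 0 (g + 3 - f₁ - f₂ - e₂)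
          + max 0 (g + 3 - f₁ - f₂ - e₃) + max 0 (g + 3 - f₁ - f₂ - e₄))
        - (max 0 (g + 3 - f₁ - f₃ - e₁) + max 0 (g + 3 - f₁ - f₃ - e₂)
          + max 0 (g + 3 - f₁ - f₃ - e₃))
        - (max 0 (g + 3 - f₁ - f₄ - e₁) + max 0 (g + 3 - f₁ - f₄ - e₂))
        - (max 0 (g + 3 - f₂ - f₃ - e₁) + max 0 (g + 3 - f₂ - f₃ - e₂))) := by
    have := deg5_key_aux g e₁ e₂ e₃ e₄ f₁ f₂ f₃ f₄ f₅
      (max 0 (g + 3 - f₁ - f₂ - e₁) + max 0 (g + 3 - f₁ - f₂ - e₂)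
          + max 0 (g + 3 - f₁ - f₂ - e₃) + max 0 (g + 3 - f₁ - f₂ - e₄))
      (max 0 (g + 3 - f₁ - f₃ - e₁) + max 0 (g + 3 - f₁ - f₃ - e₂)
          + max 0 (g + 3 - f₁ - f₃ - e₃))
      (max 0 (g + 3 - f₁ - f₄ - e₁) + max 0 (g + 3 - f₁ - f₄ - e₂))
      (max 0 (g + 3 - f₂ - f₃ - e₁) + max 0 (g + 3 - f₂ - f₃ - e₂))
      he₁₂ he₂₃ he₃₄ he₁ hf₁₂ hf₂₃ hf₃₄ hf₄₅ hf₁ hesum hfsum c1 c2 c3 c4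
      (by omega) (by omega) (by omega) (by omega)
    linarith
  have h' : (g : ℚ) + 4 - 16 * 5 ≤ 5 * ((3 * e₄ + e₃ - e₂ - 3 * e₁ + 4 * f₅ + 2 * f₄ - 2 * f₂ - 4 * f₁
        - (max 0 (g + 3 - f₁ - f₂ - e₁) + max 0 (g + 3 - f₁ - f₂ - e₂)
          + max 0 (g + 3 - f₁ - f₂ - e₃) + max 0 (g + 3 - f₁ - f₂ - e₄))
        - (max 0 (g + 3 - f₁ - f₃ - e₁) + max 0 (g + 3 - f₁ - f₃ - e₂)
          + max 0 (g + 3 - f₁ - f₃ - e₃))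
        - (max 0 (g + 3 - f₁ - f₄ - e₁) + max 0 (g + 3 - f₁ - f₄ - e₂))
        - (max 0 (g + 3 - f₂ - f₃ - e₁) + max 0 (g + 3 - f₂ - f₃ - e₂)) : ℤ) : ℚ) := by
    exact_mod_cast h
  linarith
end
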